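/- arXiv:2307.13921 — 3 statements merged into one kernel-verified Lean document; each statement's English description precedes it below -/
import Mathlib

section
/- Fix γ ∈ (0,1/2] and ε > 0. There exists d₀ > 0 such that for every real d ≥ d₀, the probability that every γ-balanced independent set I of G^{bip}_{n,d} satisfies |I| ≤ 2n·(1/(2γ(1−γ)) + ε)·(log d)/d tends to 1 as n → ∞. -/
open MeasureTheory Real Filter

noncomputable section

/-- Bernoulli measure on `Bool` with success probability `p`. -/
def coin (p : ℝ) : Measure Bool :=
  ENNReal.ofReal p • Measure.dirac true + ENNReal.ofReal (1 - p) • Measure.dirac false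

/-- The random bipartite graph `G^bip_{n,d}`, as a product (Bernoulli(d/n)) measure on
edge-indicator vectors indexed by the `n * n` possible edges. -/
def edgeMeasure (n : ℕ) (d : ℝ) : Measure (Fin (n * n) → Bool) :=
  Measure.pi fun _ => coin (d / n)

/-- Vertex set: the left class `L` is `Sum.inl`, the right class `R` is `Sum.inr`. -/
abbrev Vtx (n : ℕ) := Fin n ⊕ Fin n

/-- Adjacency in the bipartite graph with edge-indicator vector `A`:
`i ∈ L` and `j ∈ R` are adjacent iff the indicator of the edge `(i,j)` is `true`. -/
def adjB (n : ℕ) (A : Fin (n * n) → Bool) : Vtx n → Vtx n → Prop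
  | Sum.inl i, Sum.inr j => A (finProdFinEquiv (i, j)) = true
  | Sum.inr j, Sum.inl i => A (finProdFinEquiv (i, j)) = true
  | _, _ => False

/-- `S` is an independent set of the bipartite graph encoded by `A`. -/
def IsIndepSet (n : ℕ) (A : Fin (n * n) → Bool) (S : Set (Vtx n)) : Prop :=
  ∀ u ∈ S, ∀ v ∈ S, ¬ adjB n A u v

/-- `S ∩ L`. -/
def leftPart {n : ℕ} (S : Set (Vtx n)) : Set (Vtx n) := S ∩ Set.range Sum.inl

/-- `S ∩ R`. -/
def rightPart {n : ℕ} (S : Set (Vtx n)) : Set (Vtx n) := S ∩ Set.range Sum.inr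

/-- `S` is `γ`-balanced: `| |S ∩ L| - γ|S| | < 1`. -/
def IsBalanced (γ : ℝ) {n : ℕ} (S : Set (Vtx n)) : Prop :=
  |((leftPart S).ncard : ℝ) - γ * (S.ncard : ℝ)| < 1

/-! ### Auxiliary lemmas -/

section Aux

set_option maxHeartbeats 1000000

lemma aux_measurable {m : ℕ} (s : Set (Fin m → Bool)) : MeasurableSet s :=
  s.to_countable.measurableSet

instance coin_fin (p : ℝ) : IsFiniteMeasure (coin p) := by
  constructor
  simp only [coin, Measure.add_apply, Measure.smul_apply, smul_eq_mul]
  exact ENNReal.add_lt_top.mpr ⟨by finiteness, by finiteness⟩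

lemma coin_false {p : ℝ} : coin p {false} = ENNReal.ofReal (1 - p) := by
  simp [coin]

lemma coin_univ {p : ℝ} (h0 : 0 ≤ p) (h1 : p ≤ 1) : coin p Set.univ = 1 := by
  have : ENNReal.ofReal p + ENNReal.ofReal (1-p) = 1 := by
    rw [← ENNReal.ofReal_add h0 (by linarith)]; norm_num
  simp [coin, this]

lemma pi_false {m : ℕ} {p : ℝ} (h0 : 0 ≤ p) (h1 : p ≤ 1) (F : Finset (Fin m)) :
    Measure.pi (fun _ : Fin m => coin p) {A | ∀ e ∈ F, A e = false}
      = ENNReal.ofReal (1 - p) ^ F.card := by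
  have hset : {A : Fin m → Bool | ∀ e ∈ F, A e = false}
      = Set.pi Set.univ (fun e => if e ∈ F then {false} else Set.univ) := by
    ext A
    simp only [Set.mem_setOf_eq, Set.mem_pi, Set.mem_univ, forall_true_left]
    constructor
    · intro h e
      by_cases he : e ∈ F <;> simp [he, h e]
    · intro h e he
      have := h e
      simp [he] at this
      exact this
  rw [hset, Measure.pi_pi]
  rw [← Finset.prod_mul_prod_compl F]
  have h1' : ∀ e ∈ F, coin p (if e ∈ F then ({false} : Set Bool) else Set.univ)
      = ENNReal.ofReal (1 - p) := by intro e he; simp [he, coin_false]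
  have h2' : ∀ e ∈ Fᶜ, coin p (if e ∈ F then ({false} : Set Bool) else Set.univ) = 1 := by
    intro e he; simp only [Finset.mem_compl] at he; rw [if_neg he]; exact coin_univ h0 h1
  rw [Finset.prod_congr rfl h1', Finset.prod_congr rfl h2', Finset.prod_const,
    Finset.prod_const_one, mul_one]

lemma edgeMeasure_univ (n : ℕ) (d : ℝ) (h0 : 0 ≤ d / n) (h1 : d / n ≤ 1) :
    edgeMeasure n d Set.univ = 1 := by
  rw [edgeMeasure, ← Set.pi_univ Set.univ, Measure.pi_pi]
  simp only [coin_univ h0 h1]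
  simp

/-- The cylinder event that all edges between `T` and `U` are absent. -/
def ESet (n : ℕ) (T U : Finset (Fin n)) : Set (Fin (n * n) → Bool) :=
  {A | ∀ i ∈ T, ∀ j ∈ U, A (finProdFinEquiv (i, j)) = false}

lemma ESet_measure {n : ℕ} {d : ℝ} (h0 : 0 ≤ d / n) (h1 : d / n ≤ 1)
    (T U : Finset (Fin n)) :
    edgeMeasure n d (ESet n T U) = ENNReal.ofReal (1 - d / n) ^ (T.card * U.card) := by
  classical
  set F : Finset (Fin (n*n)) := (T ×ˢ U).image (fun x => finProdFinEquiv x) with hF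
  have hcard : F.card = T.card * U.card := by
    rw [hF, Finset.card_image_of_injective _ (finProdFinEquiv.injective), Finset.card_product]
  have hset : ESet n T U = {A | ∀ e ∈ F, A e = false} := by
    ext A
    simp only [ESet, Set.mem_setOf_eq, hF, Finset.mem_image, Finset.mem_product]
    constructor
    · rintro h e ⟨⟨i, j⟩, ⟨hi, hj⟩, rfl⟩
      exact h i hi j hj
    · intro h i hi j hj
      exact h _ ⟨(i, j), ⟨hi, hj⟩, rfl⟩
  rw [hset, ← hcard]
  exact pi_false h0 h1 F

lemma choose_le_exp (n a : ℕ) (ha : 0 < a) (han : a ≤ n) :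
    (n.choose a : ℝ) ≤ Real.exp (a * (1 + Real.log n - Real.log a)) := by
  have h1 : (n.choose a : ℝ) ≤ (n:ℝ) ^ a / (a.factorial : ℝ) := Nat.choose_le_pow_div a n
  have h2 : (a:ℝ) ^ a / (a.factorial : ℝ) ≤ Real.exp a :=
    Real.pow_div_factorial_le_exp (x := (a:ℝ)) (by positivity) a
  have hfa : (0:ℝ) < (a.factorial : ℝ) := by positivity
  have hn0 : (0:ℝ) < n := by exact_mod_cast lt_of_lt_of_le ha han
  have ha0 : (0:ℝ) < a := by exact_mod_cast ha
  have h3 : (a:ℝ)^a / Real.exp a ≤ (a.factorial : ℝ) := by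
    rw [div_le_iff₀ (Real.exp_pos _)]
    rw [div_le_iff₀ hfa] at h2
    linarith
  have key : Real.exp (a * (1 + Real.log n - Real.log a))
      = (n:ℝ)^a / ((a:ℝ)^a / Real.exp a) := by
    rw [div_div_eq_mul_div]
    rw [eq_div_iff (by positivity)]
    rw [← Real.exp_log (x := (n:ℝ)^a) (by positivity),
      ← Real.exp_log (x := (a:ℝ)^a) (by positivity)]
    rw [Real.log_pow, Real.log_pow, ← Real.exp_add, ← Real.exp_add]
    congr 1
    ring
  rw [key]
  calc (n.choose a : ℝ) ≤ (n:ℝ)^a / (a.factorial : ℝ) := h1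
    _ ≤ (n:ℝ)^a / ((a:ℝ)^a / Real.exp a) :=
        div_le_div_of_nonneg_left (by positivity) (by positivity) h3

lemma sum_by_card {n : ℕ} (g : ℕ → ℝ) :
    ∑ T : Finset (Fin n), g T.card
      = ∑ a ∈ Finset.range (n+1), (n.choose a : ℝ) * g a := by
  rw [← Finset.powerset_univ, Finset.sum_powerset]
  rw [Finset.card_univ, Fintype.card_fin]
  refine Finset.sum_congr rfl fun a _ => ?_
  rw [Finset.sum_congr rfl (fun T hT => by
    rw [(Finset.mem_powersetCard.mp hT).2]), Finset.sum_const,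
    Finset.card_powersetCard, Finset.card_univ, Fintype.card_fin, nsmul_eq_mul]

lemma core (γ ε d : ℝ) (hγ0 : 0 < γ) (hγ1 : γ ≤ 1/2) (hε : 0 < ε)
    (hd : max (Real.exp (4/(2*ε*γ*(1-γ)))) (max (Real.exp (1/(γ*(1/(2*γ*(1-γ))+ε)))) 3) ≤ d)
    (n a b : ℕ) (hn1 : d ≤ n)
    (hn2 : 2/γ ≤ 2*n*((1/(2*γ*(1-γ))+ε)*(Real.log d/d)))
    (han : a ≤ n) (hbn : b ≤ n)
    (hk : 2*n*((1/(2*γ*(1-γ))+ε)*(Real.log d/d)) < (a:ℝ) + b)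
    (hbal : |(a:ℝ) - γ*((a:ℝ)+b)| < 1) :
    (n.choose a : ℝ) * (n.choose b) * (1 - d/n)^(a*b) ≤ Real.exp (-((a:ℝ)+b)) := by
  obtain ⟨c, hc⟩ : ∃ c : ℝ, c = 1/(2*γ*(1-γ)) + ε := ⟨_, rfl⟩
  obtain ⟨ε', he'⟩ : ∃ e : ℝ, e = 2*ε*γ*(1-γ) := ⟨_, rfl⟩
  obtain ⟨p, hp⟩ : ∃ p : ℝ, p = d/n := ⟨_, rfl⟩
  obtain ⟨k, hkdef⟩ : ∃ k : ℝ, k = (a:ℝ) + b := ⟨_, rfl⟩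
  obtain ⟨L, hL⟩ : ∃ L : ℝ, L = Real.log d := ⟨_, rfl⟩
  rw [← hc] at hd hn2 hk
  rw [← he'] at hd
  rw [← hL] at hn2 hk
  rw [← hkdef] at hk hbal
  rw [← hp]
  have hγ1' : γ < 1 := by linarith
  have h1γ : 0 < 1 - γ := by linarith
  have hγγ : 0 < γ*(1-γ) := by positivity
  have hc0 : 0 < c := by rw [hc]; positivity
  have he'0 : 0 < ε' := by rw [he']; positivity
  have hd3 : (3:ℝ) ≤ d := le_trans (le_max_of_le_right (le_max_right _ _)) hd
  have hd0 : (0:ℝ) < d := by linarith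
  have hlog1 : 1 ≤ L := by
    rw [hL, Real.le_log_iff_exp_le hd0]
    have := Real.exp_one_lt_d9
    linarith
  have hεlog : 4 ≤ ε' * L := by
    have h1 : Real.exp (4/ε') ≤ d := le_trans (le_max_left _ _) hd
    have h2 : 4/ε' ≤ L := by rw [hL, Real.le_log_iff_exp_le hd0]; exact h1
    calc (4:ℝ) = ε' * (4/ε') := by field_simp
      _ ≤ ε' * L := mul_le_mul_of_nonneg_left h2 he'0.le
  have hγc : 1 ≤ γ*c*L := by
    have h1 : Real.exp (1/(γ*c)) ≤ d := le_trans (le_max_of_le_right (le_max_left _ _)) hd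
    have h2 : 1/(γ*c) ≤ L := by rw [hL, Real.le_log_iff_exp_le hd0]; exact h1
    have hγc0 : 0 < γ*c := by positivity
    calc (1:ℝ) = γ*c * (1/(γ*c)) := by field_simp
      _ ≤ γ*c * L := mul_le_mul_of_nonneg_left h2 hγc0.le
  have hn0 : (0:ℝ) < n := by linarith
  have hp0 : 0 ≤ p := by rw [hp]; positivity
  have hp1 : p ≤ 1 := by rw [hp, div_le_one hn0]; exact hn1
  have hpn : p * n = d := by rw [hp]; field_simp
  have hBnd : 2*(n:ℝ)*(c*(L/d)) = (n:ℝ)*(2*c*(L/d)) := by ring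
  have hkK : (n:ℝ)*(2*c*(L/d)) < k := by rw [← hBnd]; exact hk
  have hnK2 : 2/γ ≤ (n:ℝ)*(2*c*(L/d)) := by rw [← hBnd]; exact hn2
  have hnKk : 2/γ ≤ k := le_trans hnK2 hkK.le
  have hγk2 : 2 ≤ γ * k := by
    rw [div_le_iff₀ hγ0] at hnKk
    linarith [mul_comm k γ ▸ hnKk]
  obtain ⟨m₀, hm0⟩ : ∃ m : ℝ, m = γ*k - 1 := ⟨_, rfl⟩
  have hm01 : 1 ≤ m₀ := by rw [hm0]; linarith
  have hm0half : γ*k/2 ≤ m₀ := by rw [hm0]; linarith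
  have hk0 : 0 < k := by
    rcases lt_trichotomy k 0 with h|h|h
    · exfalso; nlinarith
    · exfalso; rw [h] at hγk2; simp at hγk2; linarith
    · exact h
  have hbal1 : γ*k - 1 < (a:ℝ) := by
    have := (abs_lt.mp hbal).1; linarith
  have hbal2 : (a:ℝ) < γ*k + 1 := by
    have := (abs_lt.mp hbal).2; linarith
  have ha_lb : m₀ < (a:ℝ) := by rw [hm0]; exact hbal1
  have hb_eq : (b:ℝ) = k - a := by rw [hkdef]; ring
  have h2γk : (2*γ-1)*k ≤ 0 := mul_nonpos_of_nonpos_of_nonneg (by linarith) (by positivity)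
  have hb_lb : m₀ < (b:ℝ) := by rw [hb_eq, hm0]; linarith [hbal2, h2γk]
  have ha0' : (0:ℝ) < a := by linarith
  have hb0' : (0:ℝ) < b := by linarith
  have ha0 : 0 < a := by exact_mod_cast ha0'
  have hb0 : 0 < b := by exact_mod_cast hb0'
  have hca := choose_le_exp n a ha0 han
  have hcb := choose_le_exp n b hb0 hbn
  have hpow : (1 - p)^(a*b) ≤ Real.exp (-(p * ((a:ℝ)*b))) := by
    calc (1-p)^(a*b) ≤ (Real.exp (-p))^(a*b) :=
          pow_le_pow_left₀ (by linarith) (Real.one_sub_le_exp_neg p) _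
      _ = Real.exp (-(p * ((a:ℝ)*b))) := by
          rw [← Real.exp_nat_mul]; congr 1; push_cast; ring
  have hprod : (n.choose a : ℝ) * (n.choose b) * (1 - p)^(a*b)
      ≤ Real.exp ((a:ℝ)*(1+Real.log n - Real.log a) + (b:ℝ)*(1+Real.log n - Real.log b)
          + (-(p * ((a:ℝ)*b)))) := by
    rw [Real.exp_add, Real.exp_add]
    have h3 : (0:ℝ) ≤ (1-p)^(a*b) := pow_nonneg (by linarith) _
    have h4 : (0:ℝ) ≤ Real.exp ((a:ℝ)*(1+Real.log n - Real.log a)) := (Real.exp_pos _).le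
    exact mul_le_mul (mul_le_mul hca hcb (by positivity) (Real.exp_pos _).le) hpow h3
      (mul_nonneg h4 (Real.exp_pos _).le)
  refine le_trans hprod ?_
  rw [← hkdef, Real.exp_le_exp]
  have hm00 : (0:ℝ) < m₀ := by linarith
  have hlogam : Real.log m₀ ≤ Real.log a := Real.log_le_log hm00 ha_lb.le
  have hlogbm : Real.log m₀ ≤ Real.log b := Real.log_le_log hm00 hb_lb.le
  have hab_lb : γ*(1-γ)*k^2 - k ≤ (a:ℝ)*b := by
    have h1 : (1-γ)*k - 1 ≤ (b:ℝ) := by rw [hb_eq]; linarith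
    have h0 : (0:ℝ) ≤ γ*k - 1 := by linarith
    have h2 : (γ*k-1)*((1-γ)*k-1) ≤ (a:ℝ)*b :=
      mul_le_mul hbal1.le h1 (by linarith [h2γk]) ha0'.le
    have h3 : (γ*k-1)*((1-γ)*k-1) = γ*(1-γ)*k^2 - k + 1 := by ring
    linarith
  have hlogm0 : Real.log (γ*c*L) + Real.log n - Real.log d ≤ Real.log m₀ := by
    have hccl : (0:ℝ) < γ*c*L := by positivity
    have h1 : γ*c*L*n/d ≤ m₀ := by
      have e1 : γ*((n:ℝ)*(2*c*(L/d)))/2 = γ*c*L*n/d := by field_simp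
      calc γ*c*L*n/d = γ*((n:ℝ)*(2*c*(L/d)))/2 := e1.symm
        _ ≤ γ*k/2 := by
            have := mul_le_mul_of_nonneg_left hkK.le hγ0.le
            linarith
        _ ≤ m₀ := hm0half
    have h2 : (0:ℝ) < γ*c*L*n/d := by positivity
    calc Real.log (γ*c*L) + Real.log n - Real.log d
        = Real.log (γ*c*L*n/d) := by
          rw [Real.log_div (by positivity) (by positivity),
            Real.log_mul (show (γ*c*L) ≠ 0 by positivity) (show ((n:ℝ)) ≠ 0 by positivity)]
      _ ≤ Real.log m₀ := Real.log_le_log h2 h1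
  have hpk : (1+ε')*L ≤ p*(γ*(1-γ))*k := by
    have h2 : γ*(1-γ)*2*c = 1 + ε' := by rw [hc, he']; field_simp
    have h1 : p*(γ*(1-γ))*((n:ℝ)*(2*c*(L/d))) = (1+ε')*L := by
      rw [← h2]
      have e : p*(γ*(1-γ))*((n:ℝ)*(2*c*(L/d))) = (γ*(1-γ)*2*c)*L*((p*n)/d) := by ring
      rw [e, hpn, div_self (ne_of_gt hd0), mul_one]
    have h3 : p*(γ*(1-γ))*((n:ℝ)*(2*c*(L/d))) ≤ p*(γ*(1-γ))*k :=
      mul_le_mul_of_nonneg_left hkK.le (by positivity)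
    linarith [h1 ▸ h3]
  have hlogγc : 0 ≤ Real.log (γ*c*L) := by
    rw [← Real.log_one]
    exact Real.log_le_log (by norm_num) hγc
  have hLd : Real.log d = L := hL.symm
  have hbracket : 1 + Real.log n - Real.log m₀ - p*(γ*(1-γ))*k + p ≤ -1 := by
    have h1 : Real.log n - Real.log m₀ ≤ L - Real.log (γ*c*L) := by
      rw [hLd] at hlogm0; linarith
    linarith [hpk, hεlog, hlogγc, hp1, h1]
  calc (a:ℝ)*(1+Real.log n - Real.log a) + (b:ℝ)*(1+Real.log n - Real.log b) + (-(p * ((a:ℝ)*b)))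
      ≤ k*(1+Real.log n - Real.log m₀) - p*(γ*(1-γ)*k^2 - k) := by
        have e1 : (a:ℝ)*(1+Real.log n - Real.log a) ≤ (a:ℝ)*(1+Real.log n - Real.log m₀) :=
          mul_le_mul_of_nonneg_left (by linarith) ha0'.le
        have e2 : (b:ℝ)*(1+Real.log n - Real.log b) ≤ (b:ℝ)*(1+Real.log n - Real.log m₀) :=
          mul_le_mul_of_nonneg_left (by linarith) hb0'.le
        have e3 : -(p*((a:ℝ)*b)) ≤ -(p*(γ*(1-γ)*k^2 - k)) :=
          neg_le_neg (mul_le_mul_of_nonneg_left hab_lb hp0)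
        have e4 : (a:ℝ)*(1+Real.log n - Real.log m₀) + (b:ℝ)*(1+Real.log n - Real.log m₀)
            = k*(1+Real.log n - Real.log m₀) := by rw [hkdef]; ring
        linarith
    _ = k*(1 + Real.log n - Real.log m₀ - p*(γ*(1-γ))*k + p) := by ring
    _ ≤ k*(-1) := mul_le_mul_of_nonneg_left hbracket hk0.le
    _ = -k := by ring

lemma part_finsets {n : ℕ} (S : Set (Vtx n)) :
    ∃ T U : Finset (Fin n),
      (leftPart S).ncard = T.card ∧ (rightPart S).ncard = U.card ∧
      S.ncard = T.card + U.card ∧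
      (∀ i, i ∈ T ↔ Sum.inl i ∈ S) ∧ (∀ j, j ∈ U ↔ Sum.inr j ∈ S) := by
  classical
  have hTl : (leftPart S).ncard = (Finset.univ.filter (fun i => Sum.inl i ∈ S)).card := by
    have h1 : leftPart S = Sum.inl '' {i : Fin n | Sum.inl i ∈ S} := by
      ext x
      rcases x with i | j
      · simp [leftPart, Set.mem_image]
      · simp [leftPart]
    rw [h1, Set.ncard_image_of_injective _ Sum.inl_injective]
    have h2 : {i : Fin n | Sum.inl i ∈ S}
        = ↑(Finset.univ.filter (fun i => Sum.inl i ∈ S)) := by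
      ext i; simp
    rw [h2, Set.ncard_coe_finset]
  have hUr : (rightPart S).ncard = (Finset.univ.filter (fun j => Sum.inr j ∈ S)).card := by
    have h1 : rightPart S = Sum.inr '' {j : Fin n | Sum.inr j ∈ S} := by
      ext x
      rcases x with i | j
      · simp [rightPart]
      · simp [rightPart, Set.mem_image]
    rw [h1, Set.ncard_image_of_injective _ Sum.inr_injective]
    have h2 : {j : Fin n | Sum.inr j ∈ S}
        = ↑(Finset.univ.filter (fun j => Sum.inr j ∈ S)) := by
      ext j; simp
    rw [h2, Set.ncard_coe_finset]
  have hsplit : S = leftPart S ∪ rightPart S := by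
    ext x
    rcases x with i | j
    · simp [leftPart, rightPart]
    · simp [leftPart, rightPart]
  have hdisj : Disjoint (leftPart S) (rightPart S) := by
    refine Set.disjoint_left.mpr ?_
    rintro x ⟨_, i, rfl⟩ ⟨_, j, h⟩
    exact absurd h (by simp)
  have hS : S.ncard = (leftPart S).ncard + (rightPart S).ncard := by
    conv_lhs => rw [hsplit]
    exact Set.ncard_union_eq hdisj (Set.toFinite _) (Set.toFinite _)
  exact ⟨_, _, hTl, hUr, by rw [hS, hTl, hUr], fun i => by simp, fun j => by simp⟩

end Aux

/-- Fix `γ ∈ (0,1/2]` and `ε > 0`. There exists `d₀ > 0` such that for every real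
`d ≥ d₀`, the probability that every `γ`-balanced independent set `I` of `G^bip_{n,d}` satisfies
`|I| ≤ 2n·(1/(2γ(1−γ)) + ε)·(log d)/d` tends to `1` as `n → ∞`. -/
theorem stmt0 (γ ε : ℝ) (hγ0 : 0 < γ) (hγ1 : γ ≤ 1 / 2) (hε : 0 < ε) :
    ∃ d₀ : ℝ, 0 < d₀ ∧ ∀ d : ℝ, d₀ ≤ d →
      Filter.Tendsto
        (fun n : ℕ => edgeMeasure n d
          {A | ∀ S : Set (Vtx n), IsIndepSet n A S → IsBalanced γ S →
            (S.ncard : ℝ) ≤ 2 * n * ((1 / (2 * γ * (1 - γ)) + ε) * (Real.log d / d))})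
        Filter.atTop (nhds 1) := by
  classical
  refine ⟨max (Real.exp (4/(2*ε*γ*(1-γ)))) (max (Real.exp (1/(γ*(1/(2*γ*(1-γ))+ε)))) 3),
    lt_of_lt_of_le (by norm_num) ((le_max_right _ _).trans (le_max_right _ _)), ?_⟩
  intro d hd
  have hγ1' : γ < 1 := by linarith
  have h1γ : 0 < 1 - γ := by linarith
  have hd3 : (3:ℝ) ≤ d := le_trans (le_max_of_le_right (le_max_right _ _)) hd
  have hd0 : (0:ℝ) < d := by linarith
  have hlog1 : 1 ≤ Real.log d := by
    rw [Real.le_log_iff_exp_le hd0]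
    have := Real.exp_one_lt_d9
    linarith
  have hc0 : (0:ℝ) < 1/(2*γ*(1-γ)) + ε := by positivity
  -- the key constant K > 0
  have hK0 : (0:ℝ) < 2*(1/(2*γ*(1-γ)) + ε)*(Real.log d/d) := by positivity
  -- eventual conditions on n
  have hev1 : ∀ᶠ n : ℕ in atTop, d ≤ (n:ℝ) :=
    tendsto_natCast_atTop_atTop.eventually_ge_atTop d
  have hev2 : ∀ᶠ n : ℕ in atTop,
      2/γ ≤ 2*(n:ℝ)*((1/(2*γ*(1-γ))+ε)*(Real.log d/d)) := by
    have ht : Tendsto (fun n : ℕ => 2*(n:ℝ)*((1/(2*γ*(1-γ))+ε)*(Real.log d/d)))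
        atTop atTop := by
      apply Tendsto.atTop_mul_const (by positivity)
      exact (tendsto_natCast_atTop_atTop.const_mul_atTop (by norm_num : (0:ℝ) < 2))
    exact ht.eventually_ge_atTop _
  -- the main measure bound, for good n
  have main : ∀ n : ℕ, d ≤ (n:ℝ) →
      2/γ ≤ 2*(n:ℝ)*((1/(2*γ*(1-γ))+ε)*(Real.log d/d)) →
      edgeMeasure n d
          {A | ∀ S : Set (Vtx n), IsIndepSet n A S → IsBalanced γ S →
            (S.ncard : ℝ) ≤ 2 * n * ((1 / (2 * γ * (1 - γ)) + ε) * (Real.log d / d))}ᶜ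
        ≤ ENNReal.ofReal (((n:ℝ)+1)^2
            * Real.exp (-(2*(n:ℝ)*((1/(2*γ*(1-γ))+ε)*(Real.log d/d))))) := by
    intro n hn1 hn2
    have hn0 : (0:ℝ) < n := by linarith
    have hp0 : (0:ℝ) ≤ d/n := by positivity
    have hp1 : d/n ≤ 1 := by rw [div_le_one hn0]; exact hn1
    set Bnd : ℝ := 2*(n:ℝ)*((1/(2*γ*(1-γ))+ε)*(Real.log d/d)) with hBnd
    -- the condition on cardinalities
    set cond : ℕ → ℕ → Prop := fun a b =>
      Bnd < (a:ℝ) + b ∧ |(a:ℝ) - γ*((a:ℝ)+b)| < 1 with hcond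
    set P : Finset (Finset (Fin n) × Finset (Fin n)) :=
      Finset.univ.filter (fun TU => cond TU.1.card TU.2.card) with hP
    -- step 1: inclusion into the union of cylinder events
    have hsub : {A : Fin (n*n) → Bool | ∀ S : Set (Vtx n), IsIndepSet n A S →
          IsBalanced γ S → (S.ncard : ℝ) ≤ Bnd}ᶜ
        ⊆ ⋃ TU ∈ P, ESet n TU.1 TU.2 := by
      intro A hA
      simp only [Set.mem_compl_iff, Set.mem_setOf_eq, not_forall] at hA
      obtain ⟨S, hInd, hBal, hgt⟩ := hA
      push_neg at hgt
      obtain ⟨T, U, hTl, hUr, hSum, hTmem, hUmem⟩ := part_finsets S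
      have hmemP : (T, U) ∈ P := by
        rw [hP, Finset.mem_filter]
        refine ⟨Finset.mem_univ _, ?_, ?_⟩
        · have : (S.ncard : ℝ) = (T.card : ℝ) + U.card := by rw [hSum]; push_cast; ring
          rw [← this]; exact hgt
        · have h1 : ((leftPart S).ncard : ℝ) = (T.card : ℝ) := by rw [hTl]
          have h2 : (S.ncard : ℝ) = (T.card : ℝ) + U.card := by rw [hSum]; push_cast; ring
          have := hBal
          rw [IsBalanced, h1, h2] at this
          exact this
      have hmemE : A ∈ ESet n T U := by
        intro i hi j hj
        have hiS : Sum.inl i ∈ S := (hTmem i).mp hi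
        have hjS : Sum.inr j ∈ S := (hUmem j).mp hj
        have := hInd _ hiS _ hjS
        simp only [adjB] at this
        exact Bool.eq_false_iff.mpr this
      exact Set.mem_biUnion hmemP hmemE
    -- step 2-4: union bound + cylinder measure
    have hstep2 : edgeMeasure n d ({A : Fin (n*n) → Bool | ∀ S : Set (Vtx n),
          IsIndepSet n A S → IsBalanced γ S → (S.ncard : ℝ) ≤ Bnd}ᶜ)
        ≤ ∑ TU ∈ P, ENNReal.ofReal ((1 - d/n)^(TU.1.card * TU.2.card)) := by
      refine le_trans (measure_mono hsub) ?_
      refine le_trans (measure_biUnion_finset_le P _) ?_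
      refine Finset.sum_le_sum fun TU _ => ?_
      rw [ESet_measure hp0 hp1 TU.1 TU.2, ← ENNReal.ofReal_pow (by linarith)]
    -- step 5: compute the real sum
    have hstep5 : ∑ TU ∈ P, ((1 - d/n)^(TU.1.card * TU.2.card))
        = ∑ a ∈ Finset.range (n+1), ∑ b ∈ Finset.range (n+1),
            (n.choose a : ℝ) * (n.choose b) *
              (if cond a b then (1 - d/n)^(a*b) else 0) := by
      rw [hP, Finset.sum_filter]
      rw [Fintype.sum_prod_type]
      have h1 : ∀ T : Finset (Fin n),
          (∑ U : Finset (Fin n), if cond T.card U.card then (1 - d/n)^(T.card*U.card) else 0)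
          = ∑ b ∈ Finset.range (n+1), (n.choose b : ℝ) *
              (if cond T.card b then (1 - d/n)^(T.card*b) else 0) :=
        fun T => sum_by_card (fun b => if cond T.card b then (1 - d/n)^(T.card*b) else 0)
      rw [Finset.sum_congr rfl (fun T _ => h1 T)]
      rw [sum_by_card (fun a => ∑ b ∈ Finset.range (n+1), (n.choose b : ℝ) *
        (if cond a b then (1 - d/n)^(a*b) else 0))]
      refine Finset.sum_congr rfl fun a _ => ?_
      rw [Finset.mul_sum]
      refine Finset.sum_congr rfl fun b _ => ?_
      ring
    -- step 6: bound each term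
    have hstep6 : ∑ a ∈ Finset.range (n+1), ∑ b ∈ Finset.range (n+1),
          (n.choose a : ℝ) * (n.choose b) * (if cond a b then (1 - d/n)^(a*b) else 0)
        ≤ ((n:ℝ)+1)^2 * Real.exp (-Bnd) := by
      have hterm : ∀ a ∈ Finset.range (n+1), ∀ b ∈ Finset.range (n+1),
          (n.choose a : ℝ) * (n.choose b) * (if cond a b then (1 - d/n)^(a*b) else 0)
            ≤ Real.exp (-Bnd) := by
        intro a ha b hb
        by_cases h : cond a b
        · rw [if_pos h]
          have h1 := core γ ε d hγ0 hγ1 hε hd n a b hn1 hn2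
            (Nat.lt_succ_iff.mp (Finset.mem_range.mp ha))
            (Nat.lt_succ_iff.mp (Finset.mem_range.mp hb)) h.1 h.2
          refine le_trans h1 (Real.exp_le_exp.mpr ?_)
          have := h.1
          rw [hBnd]; linarith
        · rw [if_neg h, mul_zero]
          exact (Real.exp_pos _).le
      calc ∑ a ∈ Finset.range (n+1), ∑ b ∈ Finset.range (n+1),
            (n.choose a : ℝ) * (n.choose b) * (if cond a b then (1 - d/n)^(a*b) else 0)
          ≤ ∑ a ∈ Finset.range (n+1), ∑ b ∈ Finset.range (n+1), Real.exp (-Bnd) := by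
            refine Finset.sum_le_sum fun a ha => Finset.sum_le_sum fun b hb => ?_
            exact hterm a ha b hb
        _ = ((n:ℝ)+1)^2 * Real.exp (-Bnd) := by
            rw [Finset.sum_const, Finset.sum_const, Finset.card_range, nsmul_eq_mul,
              nsmul_eq_mul]
            push_cast
            ring
    -- combine
    refine le_trans hstep2 ?_
    rw [← ENNReal.ofReal_sum_of_nonneg (fun TU _ => pow_nonneg (by linarith) _)]
    refine ENNReal.ofReal_le_ofReal ?_
    rw [hstep5]
    exact hstep6
  -- define the real bound sequence and show it tends to 0
  set Breal : ℕ → ℝ := fun n => ((n:ℝ)+1)^2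
      * Real.exp (-(2*(n:ℝ)*((1/(2*γ*(1-γ))+ε)*(Real.log d/d)))) with hBreal
  have hBtend : Tendsto Breal atTop (nhds 0) := by
    obtain ⟨K, hKdef⟩ : ∃ K : ℝ, K = 2*(1/(2*γ*(1-γ))+ε)*(Real.log d/d) := ⟨_, rfl⟩
    have hKpos : 0 < K := by rw [hKdef]; positivity
    have hr1 : Real.exp (-K) < 1 := Real.exp_lt_one_iff.mpr (by linarith)
    have hr0 : 0 < Real.exp (-K) := Real.exp_pos _
    have hsum : Summable (fun n : ℕ => (n:ℝ)^2 * (Real.exp (-K))^n) :=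
      summable_pow_mul_geometric_of_norm_lt_one 2
        (by rw [Real.norm_eq_abs, abs_of_pos hr0]; exact hr1)
    have ht0 : Tendsto (fun n : ℕ => (n:ℝ)^2 * (Real.exp (-K))^n) atTop (nhds 0) :=
      hsum.tendsto_atTop_zero
    have ht1 : Tendsto (fun n : ℕ => ((n+1:ℕ):ℝ)^2 * (Real.exp (-K))^(n+1)) atTop (nhds 0) :=
      ht0.comp (tendsto_add_atTop_nat 1)
    have ht2 : Tendsto (fun n : ℕ => (((n+1:ℕ):ℝ)^2 * (Real.exp (-K))^(n+1))
        * (Real.exp (-K))⁻¹) atTop (nhds (0 * (Real.exp (-K))⁻¹)) :=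
      ht1.mul_const _
    rw [zero_mul] at ht2
    have heq : ∀ n : ℕ, Breal n = (((n+1:ℕ):ℝ)^2 * (Real.exp (-K))^(n+1))
        * (Real.exp (-K))⁻¹ := by
      intro n
      simp only [hBreal]
      have e1 : Real.exp (-(2*(n:ℝ)*((1/(2*γ*(1-γ))+ε)*(Real.log d/d))))
          = (Real.exp (-K))^n := by
        rw [← Real.exp_nat_mul, hKdef]
        congr 1
        ring
      rw [e1]
      push_cast
      field_simp
      ring
    have hfun : Breal = fun n : ℕ => (((n+1:ℕ):ℝ)^2 * (Real.exp (-K))^(n+1))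
        * (Real.exp (-K))⁻¹ := funext heq
    rw [hfun]
    exact ht2
  -- final squeeze in ℝ≥0∞
  have hlow : Tendsto (fun n : ℕ => 1 - ENNReal.ofReal (Breal n)) atTop (nhds 1) := by
    have h1 : Tendsto (fun n : ℕ => ENNReal.ofReal (Breal n)) atTop (nhds 0) := by
      rw [← ENNReal.ofReal_zero]
      exact ENNReal.tendsto_ofReal hBtend
    have := ENNReal.Tendsto.sub (tendsto_const_nhds (x := (1:ENNReal))) h1
      (Or.inl (by norm_num))
    simpa using this
  refine tendsto_of_tendsto_of_tendsto_of_le_of_le' hlow tendsto_const_nhds ?_ ?_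
  · filter_upwards [hev1, hev2] with n hn1 hn2
    have hn0 : (0:ℝ) < n := by linarith
    have hp0 : (0:ℝ) ≤ d/n := by positivity
    have hp1 : d/n ≤ 1 := by rw [div_le_one hn0]; exact hn1
    have huniv := edgeMeasure_univ n d hp0 hp1
    set G : Set (Fin (n*n) → Bool) := {A | ∀ S : Set (Vtx n), IsIndepSet n A S →
        IsBalanced γ S →
        (S.ncard : ℝ) ≤ 2 * n * ((1 / (2 * γ * (1 - γ)) + ε) * (Real.log d / d))} with hG
    have hcompl : edgeMeasure n d G = 1 - edgeMeasure n d Gᶜ := by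
      have h1 : edgeMeasure n d (Gᶜᶜ) = edgeMeasure n d Set.univ - edgeMeasure n d Gᶜ :=
        measure_compl (aux_measurable _) (ne_top_of_le_ne_top (by rw [huniv]; norm_num)
          (measure_mono (Set.subset_univ _)))
      rw [compl_compl, huniv] at h1
      exact h1
    rw [hcompl]
    exact tsub_le_tsub_left (main n hn1 hn2) 1
  · filter_upwards [hev1] with n hn1
    have hn0 : (0:ℝ) < n := by linarith
    have hp0 : (0:ℝ) ≤ d/n := by positivity
    have hp1 : d/n ≤ 1 := by rw [div_le_one hn0]; exact hn1
    rw [← edgeMeasure_univ n d hp0 hp1]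
    exact measure_mono (Set.subset_univ _)
end
end

section
/- There exists d₀ > 0 such that for every real d ≥ d₀, the probability that every independent set I of G^{bip}_{n,d} satisfies (|I∩L| + |I∩R|) · n·(log d)/d ≥ |I∩L| · |I∩R| tends to 1 as n → ∞. (Equivalently, writing |I∩L| = α_L·(log d/d)·n and |I∩R| = α_R·(log d/d)·n, with high probability α_L + α_R ≥ α_L·α_R for every independent set I.) -/
/-! If an independent set violates the inequality, its parts `K = I ∩ L` and `M = I ∩ R` satisfy
`(|K| + |M|) T < |K| |M|` with `T = n log d / d`, so both have more than `T` elements, and no edge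
joins `K` to `M`. That event has probability
`(1 - d/n)^(|K| |M|) ≤ exp (-(d/n) |K| |M|) ≤ d^(-|K|) d^(-|M|)`, so a union bound over `(K, M)`
bounds the failure probability by `(∑_{|K| > T} d^(-|K|))²`. Once `log d ≥ 4e`, every `j > T`
has `C(n, j) d^(-j) ≤ (e n / (j d))^j ≤ 4^(-j)`, and the geometric tail vanishes as `T → ∞`. -/

open MeasureTheory Real Filter

noncomputable section

open Finset

lemma isProbabilityMeasure_coin {p : ℝ} (h0 : 0 ≤ p) (h1 : p ≤ 1) :
    IsProbabilityMeasure (coin p) :=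
  ⟨by simp [coin, ← ENNReal.ofReal_add h0 (sub_nonneg.2 h1)]⟩

lemma isProbabilityMeasure_edgeMeasure {n : ℕ} {d : ℝ} (hd : 0 ≤ d) (hdn : d ≤ n) :
    IsProbabilityMeasure (edgeMeasure n d) := by
  have : IsProbabilityMeasure (coin (d / n)) :=
    isProbabilityMeasure_coin (by positivity) (div_le_one_of_le₀ hdn n.cast_nonneg)
  unfold edgeMeasure
  infer_instance

lemma pi_coin_forall_eq_false {ι : Type*} [Fintype ι] {p : ℝ} (h0 : 0 ≤ p) (h1 : p ≤ 1)
    (E : Finset ι) :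
    Measure.pi (fun _ : ι => coin p) {A | ∀ i ∈ E, A i = false} = ENNReal.ofReal (1 - p) ^ #E := by
  have := isProbabilityMeasure_coin h0 h1
  have coin_singleton_false : coin p {false} = ENNReal.ofReal (1 - p) := by simp [coin]
  change Measure.pi _ ((E : Set ι).pi fun _ => {false}) = _
  rw [Measure.pi_pi_finset, coin_singleton_false, prod_const]

lemma choose_mul_pow_le (n j : ℕ) {x : ℝ} (hx : 0 ≤ x) :
    (n.choose j : ℝ) * x ^ j ≤ (exp 1 * n * x / j) ^ j := by
  rcases j.eq_zero_or_pos with rfl | hj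
  · simp
  have hj' : (0 : ℝ) < j := by exact_mod_cast hj
  have hfact : (j : ℝ) ^ j / j.factorial ≤ exp 1 ^ j := by
    simpa [← Real.exp_nat_mul] using Real.pow_div_factorial_le_exp (x := j) hj'.le j
  calc (n.choose j : ℝ) * x ^ j ≤ n ^ j / j.factorial * x ^ j := by
        gcongr; exact Nat.choose_le_pow_div j n
    _ = (n * x / j) ^ j * (j ^ j / j.factorial) := by rw [div_pow, mul_pow]; field_simp
    _ ≤ (n * x / j) ^ j * exp 1 ^ j := by gcongr
    _ = (exp 1 * n * x / j) ^ j := by rw [← mul_pow]; ring_nf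

lemma sum_pow_card_le {α : Type*} [Fintype α] {x : ℝ} {m : ℕ} (hx : 0 ≤ x)
    (hm : 4 * exp 1 * Fintype.card α * x ≤ m) :
    ∑ K : Finset α with m ≤ #K, x ^ #K ≤ 2 * (1 / 4) ^ m := by
  set N := Fintype.card α
  have hterm : ∀ j, m ≤ j → (N.choose j : ℝ) * x ^ j ≤ (1 / 4) ^ j := by
    intro j hj
    refine (choose_mul_pow_le N j hx).trans (pow_le_pow_left₀ (by positivity) ?_ j)
    rcases j.eq_zero_or_pos with rfl | hj0
    · simp
    rw [div_le_iff₀ (by exact_mod_cast hj0)]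
    linarith [(Nat.cast_le (α := ℝ)).2 hj]
  calc ∑ K : Finset α with m ≤ #K, x ^ #K
      = ∑ j ∈ range (N + 1) with m ≤ j, (N.choose j : ℝ) * x ^ j := by
        rw [sum_filter, sum_filter, ← powerset_univ,
          sum_powerset_apply_card (fun j => if m ≤ j then x ^ j else 0), card_univ]
        simp only [nsmul_eq_mul, mul_ite, mul_zero]
        rfl
    _ ≤ ∑ j ∈ range (N + 1) with m ≤ j, (1 / 4 : ℝ) ^ j :=
        sum_le_sum fun j hj => hterm j (mem_filter.1 hj).2
    _ ≤ ∑ j ∈ Ico m (N + 1), (1 / 4 : ℝ) ^ j := by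
        refine sum_le_sum_of_subset_of_nonneg (fun j hj => ?_) (fun _ _ _ => by positivity)
        simp only [mem_filter, mem_range] at hj
        exact mem_Ico.2 ⟨hj.2, hj.1⟩
    _ ≤ (1 / 4) ^ m / (1 - 1 / 4) := geom_sum_Ico_le_of_lt_one (by norm_num) (by norm_num)
    _ ≤ 2 * (1 / 4) ^ m := by
        rw [div_le_iff₀ (by norm_num)]
        nlinarith [pow_nonneg (show (0 : ℝ) ≤ 1 / 4 by norm_num) m]

def noEdges {n : ℕ} (K M : Finset (Fin n)) : Set (Fin (n * n) → Bool) :=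
  {A | ∀ i ∈ K, ∀ j ∈ M, A (finProdFinEquiv (i, j)) = false}

lemma edgeMeasure_noEdges {n : ℕ} {d : ℝ} (hd : 0 ≤ d) (hdn : d ≤ n) (K M : Finset (Fin n)) :
    edgeMeasure n d (noEdges K M) = ENNReal.ofReal (1 - d / n) ^ (#K * #M) := by
  have : noEdges K M = {A | ∀ e ∈ (K ×ˢ M).map finProdFinEquiv.toEmbedding, A e = false} := by
    ext A
    simp only [noEdges, Set.mem_ofPred_eq, forall_mem_map, mem_product, and_imp, Prod.forall]
    exact ⟨fun h i j hi hj => h i hi j hj, fun h i hi j hj => h i j hi hj⟩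
  rw [this, edgeMeasure, pi_coin_forall_eq_false (by positivity)
    (div_le_one_of_le₀ hdn n.cast_nonneg), card_map, card_product]

section

open scoped Classical

lemma ncard_leftPart {n : ℕ} (S : Set (Vtx n)) :
    (leftPart S).ncard = #{i | Sum.inl i ∈ S} := by
  have : leftPart S = Sum.inl '' ↑({i | Sum.inl i ∈ S} : Finset (Fin n)) := by
    ext (i | i) <;> simp [leftPart]
  rw [this, Set.ncard_image_of_injective _ Sum.inl_injective, Set.ncard_coe_finset]

lemma ncard_rightPart {n : ℕ} (S : Set (Vtx n)) :
    (rightPart S).ncard = #{j | Sum.inr j ∈ S} := by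
  have : rightPart S = Sum.inr '' ↑({j | Sum.inr j ∈ S} : Finset (Fin n)) := by
    ext (j | j) <;> simp [rightPart]
  rw [this, Set.ncard_image_of_injective _ Sum.inr_injective, Set.ncard_coe_finset]

lemma IsIndepSet.mem_noEdges {n : ℕ} {A : Fin (n * n) → Bool} {S : Set (Vtx n)}
    (hS : IsIndepSet n A S) : A ∈ noEdges {i | Sum.inl i ∈ S} {j | Sum.inr j ∈ S} := by
  intro i hi j hj
  simpa [adjB] using hS _ (mem_filter.1 hi).2 _ (mem_filter.1 hj).2

lemma compl_subset_biUnion_noEdges (n : ℕ) (T : ℝ) :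
    {A | ∀ S : Set (Vtx n), IsIndepSet n A S →
        ((leftPart S).ncard : ℝ) * ((rightPart S).ncard : ℝ) ≤
          (((leftPart S).ncard : ℝ) + ((rightPart S).ncard : ℝ)) * T}ᶜ ⊆
      ⋃ q ∈ (univ : Finset (Finset (Fin n) × Finset (Fin n))).filter
          (fun q => ((#q.1 : ℝ) + #q.2) * T < #q.1 * #q.2),
        noEdges q.1 q.2 := by
  intro A hA
  simp only [Set.mem_compl_iff, Set.mem_ofPred_eq, not_forall, not_le] at hA
  obtain ⟨S, hS, hlarge⟩ := hA
  rw [Set.mem_iUnion₂]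
  refine ⟨(({i | Sum.inl i ∈ S} : Finset (Fin n)), ({j | Sum.inr j ∈ S} : Finset (Fin n))),
    mem_filter.2 ⟨mem_univ _, ?_⟩, hS.mem_noEdges⟩
  simpa only [ncard_leftPart, ncard_rightPart] using hlarge

end

lemma one_sub_div_pow_le {a b n : ℕ} {d : ℝ} (hd : 0 < d) (hdn : d ≤ n)
    (h : ((a : ℝ) + b) * (n * (log d / d)) < a * b) :
    (1 - d / n) ^ (a * b) ≤ d⁻¹ ^ a * d⁻¹ ^ b := by
  have hn : (0 : ℝ) < n := hd.trans_le hdn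
  have hexponent : ((a : ℝ) + b) * log d < d / n * (a * b) := by
    have hrewrite : ((a : ℝ) + b) * log d = d / n * ((a + b) * (n * (log d / d))) := by
      field_simp
    rw [hrewrite]
    exact mul_lt_mul_of_pos_left h (div_pos hd hn)
  have hinv : d⁻¹ = exp (-log d) := by rw [exp_neg, exp_log hd]
  calc (1 - d / n) ^ (a * b) ≤ exp (-(d / n)) ^ (a * b) :=
        pow_le_pow_left₀ (sub_nonneg.2 (div_le_one_of_le₀ hdn hn.le)) (one_sub_le_exp_neg _) _
    _ = exp (-(d / n * (a * b))) := by rw [← exp_nat_mul]; push_cast; ring_nf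
    _ ≤ exp (-((a + b) * log d)) := exp_le_exp.2 (by linarith)
    _ = d⁻¹ ^ a * d⁻¹ ^ b := by rw [hinv, ← pow_add, ← exp_nat_mul]; push_cast; ring_nf

lemma lt_and_lt_of_add_mul_lt_mul {a b T : ℝ} (ha : 0 ≤ a) (hb : 0 ≤ b) (hT : 0 ≤ T)
    (h : (a + b) * T < a * b) : T < a ∧ T < b := by
  constructor <;> by_contra! hle <;> nlinarith [mul_nonneg ha hT, mul_nonneg hb hT]

lemma edgeMeasure_compl_le {n : ℕ} {d : ℝ} (hd : 4 * exp 1 ≤ log d) (hd0 : 0 < d) (hdn : d ≤ n) :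
    edgeMeasure n d
        {A | ∀ S : Set (Vtx n), IsIndepSet n A S →
          ((leftPart S).ncard : ℝ) * ((rightPart S).ncard : ℝ) ≤
            (((leftPart S).ncard : ℝ) + ((rightPart S).ncard : ℝ)) * (n * (log d / d))}ᶜ ≤
      ENNReal.ofReal ((2 * (1 / 4) ^ (⌊n * (log d / d)⌋₊ + 1)) ^ 2) := by
  set T := (n : ℝ) * (log d / d)
  set m := ⌊T⌋₊ + 1
  have hT : 0 ≤ T := mul_nonneg n.cast_nonneg (div_nonneg (by linarith [exp_pos 1]) hd0.le)
  set large := (univ : Finset (Finset (Fin n))).filter (m ≤ #·)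
  set bad := (univ : Finset (Finset (Fin n) × Finset (Fin n))).filter
    (fun q => ((#q.1 : ℝ) + #q.2) * T < #q.1 * #q.2)
  let f : Finset (Fin n) → ENNReal := fun K => ENNReal.ofReal (d⁻¹ ^ #K)
  have hsum : ∑ K ∈ large, f K ≤ ENNReal.ofReal (2 * (1 / 4) ^ m) := by
    rw [← ENNReal.ofReal_sum_of_nonneg fun _ _ => by positivity]
    refine ENNReal.ofReal_le_ofReal (sum_pow_card_le (by positivity) ?_)
    calc 4 * exp 1 * Fintype.card (Fin n) * d⁻¹ = n * (4 * exp 1 / d) := by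
          rw [Fintype.card_fin]; ring
      _ ≤ n * (log d / d) := by gcongr
      _ ≤ m := (Nat.lt_floor_add_one T).le.trans (by push_cast [m]; rfl)
  have hbad_subset : bad ⊆ large ×ˢ large := by
    intro q hq
    obtain ⟨h1, h2⟩ :=
      lt_and_lt_of_add_mul_lt_mul (by positivity) (by positivity) hT (mem_filter.1 hq).2
    exact mem_product.2 ⟨mem_filter.2 ⟨mem_univ _, (Nat.floor_lt hT).2 h1⟩,
      mem_filter.2 ⟨mem_univ _, (Nat.floor_lt hT).2 h2⟩⟩
  calc edgeMeasure n d _ ≤ edgeMeasure n d (⋃ q ∈ bad, noEdges q.1 q.2) :=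
        measure_mono (compl_subset_biUnion_noEdges n T)
    _ ≤ ∑ q ∈ bad, edgeMeasure n d (noEdges q.1 q.2) := measure_biUnion_finset_le _ _
    _ ≤ ∑ q ∈ bad, f q.1 * f q.2 := by
        refine sum_le_sum fun q hq => ?_
        rw [edgeMeasure_noEdges hd0.le hdn,
          ← ENNReal.ofReal_pow (sub_nonneg.2 (div_le_one_of_le₀ hdn n.cast_nonneg)),
          ← ENNReal.ofReal_mul (by positivity)]
        exact ENNReal.ofReal_le_ofReal (one_sub_div_pow_le hd0 hdn (mem_filter.1 hq).2)
    _ ≤ ∑ q ∈ large ×ˢ large, f q.1 * f q.2 := sum_le_sum_of_subset hbad_subset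
    _ = (∑ K ∈ large, f K) ^ 2 := by rw [sq, sum_mul_sum, sum_product]
    _ ≤ _ := by rw [ENNReal.ofReal_pow (by positivity)]; gcongr

lemma tendsto_measure_of_tendsto_measure_compl {ι : Type*} {l : Filter ι} {X : ι → Type*}
    [∀ i, MeasurableSpace (X i)] {μ : ∀ i, Measure (X i)} {s : ∀ i, Set (X i)}
    (hμ : ∀ᶠ i in l, IsProbabilityMeasure (μ i)) (h : Tendsto (fun i => μ i (s i)ᶜ) l (nhds 0)) :
    Tendsto (fun i => μ i (s i)) l (nhds 1) := by
  have hlower : Tendsto (fun i => 1 - μ i (s i)ᶜ) l (nhds 1) := by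
    simpa using ENNReal.Tendsto.sub tendsto_const_nhds h (Or.inl ENNReal.one_ne_top)
  refine tendsto_of_tendsto_of_tendsto_of_le_of_le' hlower tendsto_const_nhds ?_ ?_
  · filter_upwards [hμ] with i hi
    rw [tsub_le_iff_right, ← measure_univ (μ := μ i), ← Set.union_compl_self (s i)]
    exact measure_union_le _ _
  · filter_upwards [hμ] with i hi
    exact prob_le_one

/-- There exists `d₀ > 0` such that for every real `d ≥ d₀`, the probability that
every independent set `I` of `G^bip_{n,d}` satisfies
`(|I∩L| + |I∩R|) · n·(log d)/d ≥ |I∩L| · |I∩R|` tends to `1` as `n → ∞`. -/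
theorem stmt2 :
    ∃ d₀ : ℝ, 0 < d₀ ∧ ∀ d : ℝ, d₀ ≤ d →
      Filter.Tendsto
        (fun n : ℕ => edgeMeasure n d
          {A | ∀ S : Set (Vtx n), IsIndepSet n A S →
            ((leftPart S).ncard : ℝ) * ((rightPart S).ncard : ℝ) ≤
              (((leftPart S).ncard : ℝ) + ((rightPart S).ncard : ℝ)) *
                (n * (Real.log d / d))})
        Filter.atTop (nhds 1) := by
  refine ⟨exp (4 * exp 1), exp_pos _, fun d hd => ?_⟩
  have hd0 : 0 < d := (exp_pos _).trans_le hd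
  have hlog : 4 * exp 1 ≤ log d := (le_log_iff_exp_le hd0).2 hd
  have hT : Tendsto (fun n : ℕ => (n : ℝ) * (log d / d)) atTop atTop :=
    tendsto_natCast_atTop_atTop.atTop_mul_const (div_pos (by linarith [exp_pos 1]) hd0)
  have hbound : Tendsto (fun n : ℕ => ENNReal.ofReal ((2 * (1 / 4) ^ (⌊n * (log d / d)⌋₊ + 1)) ^ 2))
      atTop (nhds 0) := by
    have hpow := (tendsto_pow_atTop_nhds_zero_of_lt_one (by norm_num : (0 : ℝ) ≤ 1 / 4)
      (by norm_num)).comp ((tendsto_add_atTop_nat 1).comp (tendsto_nat_floor_atTop.comp hT))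
    simpa using ENNReal.tendsto_ofReal ((hpow.const_mul 2).pow 2)
  have hdn : ∀ᶠ n : ℕ in atTop, d ≤ n := tendsto_natCast_atTop_atTop.eventually_ge_atTop d
  refine tendsto_measure_of_tendsto_measure_compl
    (hdn.mono fun n hn => isProbabilityMeasure_edgeMeasure hd0.le hn) ?_
  exact tendsto_of_tendsto_of_tendsto_of_le_of_le' tendsto_const_nhds hbound
    (Eventually.of_forall fun _ => zero_le) (hdn.mono fun n hn => edgeMeasure_compl_le hlog hd0 hn)
end
end

section
/- Fix ε ∈ (0,1) and a real d > 1. There exist c > 0 and n₀ such that for every integer n ≥ n₀ and every subset L₁ ⊆ L with |L₁| ≤ (1−ε)·(log d/d)·n, the probability that the number of vertices v ∈ R having no neighbor in L₁ in G^{bip}_{n,d} is at least (1−ε)·d^{ε−1}·n is at least 1 − exp(−c·n). -/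
open MeasureTheory Real Filter

noncomputable section

/-! For a right vertex `j`, the event that `j` has no neighbour in `L₁` depends only on the
edges at `j`, so the number of such vertices is a sum of `n` independent indicators, each of
mean `(1 - d/n)^{|L₁|}`. As `(1 - d/n)^{bn} → e^{-db}`, the bound on `|L₁|` makes this mean
eventually larger than `(1 - ε/2) d^{ε-1}`, and Hoeffding's inequality bounds the probability of
falling `(ε/2) d^{ε-1} n` below the expected count by `exp (-c n)`. -/

open ProbabilityTheory Topology

theorem measureReal_sum_le_sub_le_of_iIndepFun {Ω ι : Type*} [MeasurableSpace Ω] {μ : Measure Ω}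
    [IsProbabilityMeasure μ] [Fintype ι] {X : ι → Ω → ℝ} (hindep : iIndepFun X μ)
    (hmeas : ∀ i, AEMeasurable (X i) μ) (hbdd : ∀ i, ∀ᵐ ω ∂μ, X i ω ∈ Set.Icc 0 1)
    {t : ℝ} (ht : 0 ≤ t) :
    μ.real {ω | ∑ i, X i ω ≤ ∑ i, μ[X i] - t} ≤ exp (-2 * t ^ 2 / Fintype.card ι) := by
  have hsubG : ∀ i ∈ (Finset.univ : Finset ι),
      HasSubgaussianMGF (fun ω ↦ μ[X i] - X i ω) (1 / 4) μ := fun i _ ↦ by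
    convert (hasSubgaussianMGF_of_mem_Icc (hmeas i) (hbdd i)).neg using 1
    · ext ω; simp
    · norm_num
  have hindep' : iIndepFun (fun i ω ↦ μ[X i] - X i ω) μ :=
    hindep.comp (fun i (x : ℝ) ↦ (∫ ω, X i ω ∂μ) - x) fun i ↦ by fun_prop
  convert HasSubgaussianMGF.measure_sum_ge_le_of_iIndepFun hindep' hsubG ht using 2
  · ext ω
    simp only [Set.mem_ofPred_eq, Finset.sum_sub_distrib]
    constructor <;> intro h <;> linarith
  · simp only [Finset.sum_const, Finset.card_univ, nsmul_eq_mul]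
    push_cast
    ring

theorem measurePreserving_uncurry_comp_symm {ι κ ι' α : Type*} [Fintype ι] [Fintype κ]
    [Fintype ι'] [MeasurableSpace α] (μ : Measure α) [SigmaFinite μ] (σ : ι × κ ≃ ι') :
    MeasurePreserving (fun (B : ι → κ → α) (e : ι') ↦ Function.uncurry B (σ.symm e))
      (Measure.pi fun _ : ι ↦ Measure.pi fun _ : κ ↦ μ) (Measure.pi fun _ : ι' ↦ μ) := by
  have hmeas : Measurable fun (B : ι → κ → α) (e : ι') ↦ Function.uncurry B (σ.symm e) := by
    fun_prop
  refine ⟨hmeas, (Measure.pi_eq fun s hs ↦ ?_).symm⟩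
  have hpre : (fun (B : ι → κ → α) (e : ι') ↦ Function.uncurry B (σ.symm e)) ⁻¹'
      Set.univ.pi s = Set.univ.pi fun i ↦ Set.univ.pi fun k ↦ s (σ (i, k)) := by
    ext B
    simp only [Set.mem_preimage, Set.mem_univ_pi]
    exact ⟨fun h i k ↦ by simpa using h (σ (i, k)),
      fun h e ↦ by simpa [Function.uncurry] using h (σ.symm e).1 (σ.symm e).2⟩
  rw [Measure.map_apply hmeas (.univ_pi hs), hpre, Measure.pi_pi]
  simp_rw [Measure.pi_pi]
  rw [← Fintype.prod_prod_type' (fun i k ↦ μ (s (σ (i, k)))), σ.prod_comp (fun e ↦ μ (s e))]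

theorem isProbabilityMeasure_coin_s13 {p : ℝ} (hp0 : 0 ≤ p) (hp1 : p ≤ 1) :
    IsProbabilityMeasure (coin p) := by
  constructor
  simp [coin, ← ENNReal.ofReal_add hp0 (sub_nonneg.2 hp1)]

theorem coin_real_false {p : ℝ} (hp1 : p ≤ 1) : (coin p).real {false} = 1 - p := by
  simp [coin, Measure.real, sub_nonneg.2 hp1]

theorem measureReal_pi_setOf_forall_mem_eq {ι α : Type*} [Fintype ι] [MeasurableSpace α]
    [MeasurableSingletonClass α] (μ : Measure α) [IsProbabilityMeasure μ] (S : Set ι) (a : α) :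
    (Measure.pi fun _ : ι ↦ μ).real {g | ∀ i ∈ S, g i = a} = μ.real {a} ^ S.ncard := by
  classical
  have hbox : {g : ι → α | ∀ i ∈ S, g i = a} =
      Set.univ.pi fun i ↦ if i ∈ S then {a} else Set.univ := by
    ext g; simp only [Set.mem_ofPred_eq, Set.mem_univ_pi]
    refine forall_congr' fun i ↦ ?_
    split_ifs with hi <;> simp [hi]
  rw [hbox, measureReal_def, Measure.pi_pi, ENNReal.toReal_prod]
  simp only [apply_ite, measure_univ, ENNReal.toReal_one]
  rw [Finset.prod_ite, Finset.prod_const_one, mul_one, Finset.prod_const,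
    Set.ncard_eq_toFinset_card']
  congr 1
  simp

theorem measureReal_ncard_setOf_forall_mem_eq_lt_le {ι κ α : Type*} [Fintype ι] [Fintype κ]
    [MeasurableSpace α] [MeasurableSingletonClass α] (μ : Measure α) [IsProbabilityMeasure μ]
    (S : Set κ) (a : α) {t : ℝ} (ht : t ≤ Fintype.card ι * μ.real {a} ^ S.ncard) :
    (Measure.pi fun _ : ι ↦ Measure.pi fun _ : κ ↦ μ).real
        {B | ({i | ∀ k ∈ S, B i k = a}.ncard : ℝ) < t} ≤
      exp (-2 * (Fintype.card ι * μ.real {a} ^ S.ncard - t) ^ 2 / Fintype.card ι) := by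
  classical
  set E : Set (κ → α) := {g | ∀ k ∈ S, g k = a}
  have hE : MeasurableSet E := by
    have hEeq : E = ⋂ k ∈ S, (fun g : κ → α ↦ g k) ⁻¹' {a} := by ext; simp [E]
    rw [hEeq]
    exact .biInter S.to_countable fun k _ ↦ measurable_pi_apply k (measurableSet_singleton a)
  set X : ι → (ι → κ → α) → ℝ := fun i B ↦ E.indicator 1 (B i)
  have hXmeas : ∀ i, Measurable (X i) := fun i ↦
    (measurable_one.indicator hE).comp (measurable_pi_apply i)
  have hmean : ∀ i, (Measure.pi fun _ : ι ↦ Measure.pi fun _ : κ ↦ μ)[X i] =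
      μ.real {a} ^ S.ncard := fun i ↦ by
    rw [integral_comp_eval (measurable_one.indicator hE).aestronglyMeasurable,
      integral_indicator_one hE, measureReal_pi_setOf_forall_mem_eq]
  have htail := measureReal_sum_le_sub_le_of_iIndepFun (X := X)
    (iIndepFun_pi (μ := fun _ : ι ↦ Measure.pi fun _ : κ ↦ μ)
      fun _ ↦ (measurable_one.indicator hE).aemeasurable)
    (fun i ↦ (hXmeas i).aemeasurable)
    (fun i ↦ ae_of_all _ fun B ↦ ⟨Set.indicator_nonneg (fun _ _ ↦ zero_le_one) _,
      Set.indicator_le_self' (fun _ _ ↦ zero_le_one) _⟩)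
    (sub_nonneg.2 ht)
  simp only [hmean, Finset.sum_const, Finset.card_univ, nsmul_eq_mul, sub_sub_cancel] at htail
  refine le_trans (measureReal_mono fun B (hB : _ < t) ↦ ?_) htail
  have hcount : ({i | ∀ k ∈ S, B i k = a}.ncard : ℝ) = ∑ i, X i B := by
    simp [X, E, Set.indicator_apply, Finset.sum_boole, Set.ncard_eq_toFinset_card']
  exact (hcount ▸ hB).le

theorem le_edgeMeasure_le_ncard_noNeighbor {n : ℕ} {d : ℝ} (hd : 0 ≤ d) (hdn : d ≤ n)
    (L1 : Set (Fin n)) {t : ℝ} (ht : t ≤ n * (1 - d / n) ^ L1.ncard) :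
    ENNReal.ofReal (1 - exp (-2 * (n * (1 - d / n) ^ L1.ncard - t) ^ 2 / n)) ≤
      edgeMeasure n d
        {A | t ≤ (Set.ncard {j : Fin n | ∀ i ∈ L1, A (finProdFinEquiv (i, j)) = false} : ℝ)} := by
  have hp1 : d / n ≤ 1 := div_le_one_of_le₀ hdn (Nat.cast_nonneg n)
  have := isProbabilityMeasure_coin_s13 (div_nonneg hd (Nat.cast_nonneg n)) hp1
  -- regroup the edge coordinates by right endpoint: the edge `(i, j)` becomes `B j i`
  set σ : Fin n × Fin n ≃ Fin (n * n) := (Equiv.prodComm _ _).trans finProdFinEquiv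
  have hΦ := measurePreserving_uncurry_comp_symm (coin (d / n)) σ
  have hpre :
      (fun (B : Fin n → Fin n → Bool) (e : Fin (n * n)) ↦ Function.uncurry B (σ.symm e)) ⁻¹'
      {A | t ≤ (Set.ncard {j : Fin n | ∀ i ∈ L1, A (finProdFinEquiv (i, j)) = false} : ℝ)} =
      {B | ({j | ∀ i ∈ L1, B j i = false}.ncard : ℝ) < t}ᶜ := by
    have hσ : ∀ i j, σ.symm (finProdFinEquiv (i, j)) = (j, i) := fun i j ↦ σ.symm_apply_eq.2 rfl
    ext B
    simp only [Set.mem_preimage, Set.mem_ofPred_eq, hσ, Function.uncurry_apply_pair,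
      Set.mem_compl_iff, not_lt]
  have htail := measureReal_ncard_setOf_forall_mem_eq_lt_le (ι := Fin n) (t := t)
    (coin (d / n)) L1 false (by rwa [coin_real_false hp1, Fintype.card_fin])
  rw [coin_real_false hp1, Fintype.card_fin] at htail
  rw [edgeMeasure, ← ofReal_measureReal,
    ← hΦ.measureReal_preimage (Set.toFinite _).measurableSet.nullMeasurableSet, hpre,
    probReal_compl_eq_one_sub (Set.toFinite _).measurableSet]
  exact ENNReal.ofReal_le_ofReal (sub_le_sub_left htail 1)

theorem eventually_le_one_sub_div_pow {a b r : ℝ} (ha : 0 ≤ a) (hr : r < exp (-(a * b))) :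
    ∀ᶠ n : ℕ in atTop, ∀ k : ℕ, (k : ℝ) ≤ b * n → r ≤ (1 - a / n) ^ k := by
  have hlim : Tendsto (fun n : ℕ ↦ ((1 - a / n) ^ (n : ℝ)) ^ b) atTop (𝓝 (exp (-(a * b)))) := by
    have := ((tendsto_one_add_div_rpow_exp (-a)).comp tendsto_natCast_atTop_atTop).rpow_const
      (p := b) (Or.inl (exp_pos _).ne')
    simpa [Function.comp_def, ← exp_mul, neg_div, ← sub_eq_add_neg] using this
  filter_upwards [(hlim.eventually (eventually_gt_nhds hr)),
    tendsto_natCast_atTop_atTop.eventually_gt_atTop a] with n hrn han k hk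
  have hbase : 0 < 1 - a / n := by
    rw [sub_pos, div_lt_one (ha.trans_lt han)]; exact han
  calc r ≤ ((1 - a / n) ^ (n : ℝ)) ^ b := hrn.le
    _ = (1 - a / n) ^ (b * n) := by rw [← rpow_mul hbase.le, mul_comm]
    _ ≤ (1 - a / n) ^ (k : ℝ) :=
      rpow_le_rpow_of_exponent_ge hbase (sub_le_self _ (by positivity)) hk
    _ = (1 - a / n) ^ k := rpow_natCast _ k

theorem stmt13_general (ε : ℝ) (hε0 : 0 < ε) (d : ℝ) (hd : 1 < d) :
    ∃ c : ℝ, 0 < c ∧ ∃ n₀ : ℕ, ∀ n : ℕ, n₀ ≤ n →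
      ∀ L1 : Set (Fin n), (L1.ncard : ℝ) ≤ (1 - ε) * (Real.log d / d) * n →
        ENNReal.ofReal (1 - Real.exp (-c * n)) ≤
          edgeMeasure n d
            {A | (1 - ε) * d ^ (ε - 1) * n ≤
              (Set.ncard {j : Fin n | ∀ i ∈ L1, A (finProdFinEquiv (i, j)) = false} : ℝ)} := by
  have hq₀ : 0 < d ^ (ε - 1) := rpow_pos_of_pos (by linarith) _
  have hlimit : exp (-(d * ((1 - ε) * (Real.log d / d)))) = d ^ (ε - 1) := by
    rw [rpow_def_of_pos (by linarith)]
    congr 1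
    field_simp
    ring
  have hev := (eventually_le_one_sub_div_pow (a := d) (b := (1 - ε) * (Real.log d / d))
    (r := (1 - ε / 2) * d ^ (ε - 1)) (by linarith) (by rw [hlimit]; nlinarith)).and
    (tendsto_natCast_atTop_atTop.eventually_ge_atTop d)
  obtain ⟨n₀, hn₀⟩ := eventually_atTop.1 hev
  refine ⟨(ε * d ^ (ε - 1)) ^ 2 / 2, by positivity, n₀, fun n hn L1 hL1 ↦ ?_⟩
  obtain ⟨hmean, hdn⟩ := hn₀ n hn
  have hq := hmean _ hL1
  have hn : (0 : ℝ) < n := by linarith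
  have hgap :
      ε * d ^ (ε - 1) * n / 2 ≤ n * (1 - d / n) ^ L1.ncard - (1 - ε) * d ^ (ε - 1) * n := by
    nlinarith
  refine le_trans (ENNReal.ofReal_le_ofReal ?_) (le_edgeMeasure_le_ncard_noNeighbor (by linarith)
    hdn L1 (by nlinarith [mul_pos (mul_pos hε0 hq₀) hn]))
  have hsq := pow_le_pow_left₀ (by positivity) hgap 2
  gcongr
  rw [div_le_iff₀ hn]
  nlinarith

/-- Fix `ε ∈ (0,1)` and `d > 1`. There exist `c > 0` and `n₀` such that for
every `n ≥ n₀` and every `L₁ ⊆ L` with `|L₁| ≤ (1−ε)·(log d/d)·n`, the probability that the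
number of vertices `v ∈ R` with no neighbor in `L₁` is at least `(1−ε)·d^{ε−1}·n` is at least
`1 − exp(−c·n)`. -/
theorem stmt13 (ε : ℝ) (hε0 : 0 < ε) (hε1 : ε < 1) (d : ℝ) (hd : 1 < d) :
    ∃ c : ℝ, 0 < c ∧ ∃ n₀ : ℕ, ∀ n : ℕ, n₀ ≤ n →
      ∀ L1 : Set (Fin n), (L1.ncard : ℝ) ≤ (1 - ε) * (Real.log d / d) * n →
        ENNReal.ofReal (1 - Real.exp (-c * n)) ≤
          edgeMeasure n d
            {A | (1 - ε) * d ^ (ε - 1) * n ≤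
              (Set.ncard {j : Fin n | ∀ i ∈ L1, A (finProdFinEquiv (i, j)) = false} : ℝ)} :=
  stmt13_general ε hε0 d hd
end
end
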